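/- In the free-fermion case η = π/4 (so α = 2), μ = 0, the NE arctic-curve parametrization degenerates to a straight segment as λ → −π/4 from above, under a square-root rescaling of the parameter: for every ξ > 0, lim_{ε→0⁺} X_NE(ξ·√ε)|_{λ=−π/4+ε} = −4ξ²/(1+4ξ²) and lim_{ε→0⁺} Y_NE(ξ·√ε)|_{λ=−π/4+ε} = 2 − 4ξ²/(1+4ξ²). -/

import Mathlib

open Real

/-- The inverse slope `A(ξ) = s(ξ)⁻¹` of the family of tangent lines in the Tangent
Method for the 20V model with DWBC3. -/
noncomputable def A20V (η lam mu ξ : ℝ) : ℝ :=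
  (sin (ξ + lam + η) * sin (ξ + lam - η) / (sin ξ * sin (ξ + 2 * η))) *
    ((sin ξ * sin (ξ + 2 * η) +
        sin (ξ + (lam - η + mu) / 2) * sin (ξ + (lam + 3 * η + mu) / 2)) /
      (sin (ξ + lam + η) * sin (ξ + lam - η) +
        sin (ξ + (lam - η + mu) / 2) * sin (ξ + (lam + 3 * η + mu) / 2)))

/-- The saddle-point exit position `κ(ξ)` of the Tangent Method for the 20V model
with DWBC3, with `α = π/(π - 2η)`. -/
noncomputable def kappa20V (η lam mu ξ : ℝ) : ℝ :=
  (2 * cot (ξ + lam - η) - cot ξ - cot (ξ + lam + η) +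
      (π / (π - 2 * η)) * cot ((π / (π - 2 * η)) * ξ) -
      (π / (π - 2 * η)) * cot ((π / (π - 2 * η)) * (ξ + lam - η))) *
    (sin (ξ + lam + η) * sin (ξ + lam - η) * sin (ξ + (lam - η + mu) / 2) *
      sin (ξ + (lam + 3 * η + mu) / 2)) /
    (sin (2 * η) *
      (sin (ξ + lam + η) * sin (ξ + lam - η) +
        sin (ξ + (lam - η + mu) / 2) * sin (ξ + (lam + 3 * η + mu) / 2)))

/-- The `x`-coordinate of the NE branch of the arctic curve (envelope of the family
of tangent lines): `X_NE(ξ) = κ'(ξ)/A'(ξ)`. -/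
noncomputable def Xne (η lam mu ξ : ℝ) : ℝ :=
  deriv (kappa20V η lam mu) ξ / deriv (A20V η lam mu) ξ

/-- The `y`-coordinate of the NE branch of the arctic curve:
`Y_NE(ξ) = κ(ξ) - A(ξ)·κ'(ξ)/A'(ξ)`. -/
noncomputable def Yne (η lam mu ξ : ℝ) : ℝ :=
  kappa20V η lam mu ξ - A20V η lam mu ξ * Xne η lam mu ξ

open Filter Topology

/-!
At `η = π/4`, `μ = 0`, `λ = -π/4 + ε` (so `α = 2`) the product-to-sum formulas collapse the
two Tangent Method functions to `A = F·G` and `κ = P·Q`, where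
`F = sin(2ξ+2ε)/sin 2ξ`, `G = (sin 2ξ - cos(2ξ+ε))/D`, `P = cos(ξ+2ε)/cos ξ + 3`,
`Q = cos(2ξ+ε)/(2D)` and `D = sin(2ξ+2ε) + cos(2ξ+ε)`. Their `ξ`-derivatives are again
short: by the addition theorems all cross terms combine into
`F' = -2 sin 2ε / sin² 2ξ`, `G' = 2(sin 2ε + 2 cos ε)/D²`, `P' = -sin 2ε / cos² ξ` and
`Q' = -cos ε / D²`.

Along `ε = s²`, `ξ ↦ ξ s` every factor except `F` and `F'` is continuous at `s = 0`, with values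
`G → -1`, `G' → 4`, `P → 4`, `P' → 0`, `Q → 1/2`, `Q' → -1`; writing `sin t = t · sinc t` shows
`F → 1` and `F' → -1/ξ²`. Hence `X = (P'Q + PQ')/(F'G + FG') → -4/(4 + 1/ξ²)` and
`Y = PQ - FG·X → 2 + lim X`.
-/

lemma tendsto_nhdsGT_of_eqOn_of_continuousAt {f g : ℝ → ℝ} {a b : ℝ}
    (hfg : Set.EqOn f g (Set.Ioi a)) (hg : ContinuousAt g a) (hb : g a = b) :
    Tendsto f (𝓝[>] a) (𝓝 b) :=
  hb ▸ hg.continuousWithinAt.tendsto.congr' (eventuallyEq_nhdsWithin_of_eqOn hfg).symm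

lemma tendsto_sqrt_nhdsGT_zero : Tendsto sqrt (𝓝[>] 0) (𝓝[>] 0) :=
  tendsto_nhdsWithin_iff.2
    ⟨(continuous_sqrt.tendsto' 0 0 sqrt_zero).mono_left nhdsWithin_le_nhds,
      eventually_nhdsWithin_of_forall fun _ hx => sqrt_pos.2 hx⟩

lemma tendsto_nhdsGT_zero_of_comp_sq {α : Type*} {f : ℝ → α} {l : Filter α}
    (h : Tendsto (fun s => f (s ^ 2)) (𝓝[>] 0) l) : Tendsto f (𝓝[>] 0) l := by
  refine (h.comp tendsto_sqrt_nhdsGT_zero).congr' ?_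
  filter_upwards [self_mem_nhdsWithin] with ε (hε : 0 < ε)
  simp [sq_sqrt hε.le]

lemma Real.mul_sinc (x : ℝ) : x * sinc x = sin x := by
  rcases eq_or_ne x 0 with rfl | hx
  · simp
  · rw [sinc_of_ne_zero hx]; field_simp

lemma sin_sub_pi_div_four_mul_sin_add_pi_div_four (a : ℝ) :
    sin (a - π / 4) * sin (a + π / 4) = -cos (2 * a) / 2 := by
  rw [sin_sub, sin_add, cos_two_mul', sin_pi_div_four, cos_pi_div_four]
  linear_combination (sin a ^ 2 - cos a ^ 2) / 4 * sq_sqrt (show (0 : ℝ) ≤ 2 by norm_num)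

lemma hasDerivAt_sin_two_mul (y : ℝ) :
    HasDerivAt (fun y => sin (2 * y)) (2 * cos (2 * y)) y :=
  ((hasDerivAt_id' y).const_mul 2).sin.congr_deriv (by ring)

lemma hasDerivAt_sin_two_mul_add (c y : ℝ) :
    HasDerivAt (fun y => sin (2 * y + c)) (2 * cos (2 * y + c)) y :=
  (((hasDerivAt_id' y).const_mul 2).add_const c).sin.congr_deriv (by ring)

lemma hasDerivAt_cos_two_mul_add (c y : ℝ) :
    HasDerivAt (fun y => cos (2 * y + c)) (-(2 * sin (2 * y + c))) y :=
  (((hasDerivAt_id' y).const_mul 2).add_const c).cos.congr_deriv (by ring)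

namespace FreeFermion

noncomputable def D (ε y : ℝ) : ℝ := sin (2 * y + 2 * ε) + cos (2 * y + ε)

noncomputable def F (ε y : ℝ) : ℝ := sin (2 * y + 2 * ε) / sin (2 * y)

noncomputable def G (ε y : ℝ) : ℝ := (sin (2 * y) - cos (2 * y + ε)) / D ε y

noncomputable def P (ε y : ℝ) : ℝ := cos (y + 2 * ε) / cos y + 3

noncomputable def Q (ε y : ℝ) : ℝ := cos (2 * y + ε) / (2 * D ε y)

noncomputable def F' (ε y : ℝ) : ℝ := -2 * sin (2 * ε) / sin (2 * y) ^ 2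

noncomputable def G' (ε y : ℝ) : ℝ := 2 * (sin (2 * ε) + 2 * cos ε) / D ε y ^ 2

noncomputable def P' (ε y : ℝ) : ℝ := -sin (2 * ε) / cos y ^ 2

noncomputable def Q' (ε y : ℝ) : ℝ := -cos ε / D ε y ^ 2

section ClosedForms

variable {ε : ℝ}

lemma A20V_eq : A20V (π / 4) (-(π / 4) + ε) 0 = F ε * G ε := by
  funext y
  rw [Pi.mul_apply, A20V, F, G, D, show y + (-(π / 4) + ε) + π / 4 = y + ε by ring,
    show y + (-(π / 4) + ε) - π / 4 = y + ε - π / 2 by ring,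
    show y + 2 * (π / 4) = y + π / 2 by ring,
    show y + (-(π / 4) + ε - π / 4 + 0) / 2 = y + ε / 2 - π / 4 by ring,
    show y + (-(π / 4) + ε + 3 * (π / 4) + 0) / 2 = y + ε / 2 + π / 4 by ring,
    sin_sub_pi_div_four_mul_sin_add_pi_div_four, sin_sub_pi_div_two, sin_add_pi_div_two,
    show 2 * y + 2 * ε = 2 * (y + ε) by ring, sin_two_mul, sin_two_mul y,
    show 2 * (y + ε / 2) = 2 * y + ε by ring,
    show sin (y + ε) * -cos (y + ε) + -cos (2 * y + ε) / 2
      = -((2 * sin (y + ε) * cos (y + ε) + cos (2 * y + ε)) / 2) by ring,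
    show sin y * cos y + -cos (2 * y + ε) / 2 = (2 * sin y * cos y - cos (2 * y + ε)) / 2 by ring,
    div_neg, div_div_div_cancel_right₀ two_ne_zero]
  ring

lemma cot_combination_mul_sin_mul_cos {y u : ℝ} (hy : sin (2 * y) ≠ 0)
    (hu : sin (2 * u) ≠ 0) :
    (2 * cot (u - π / 2) - cot y - cot u + 2 * cot (2 * y) - 2 * cot (2 * (u - π / 2))) *
      (sin u * cos u) = -(cos (2 * u - y) / cos y + 3) / 2 := by
  rw [sin_two_mul, mul_ne_zero_iff, mul_ne_zero_iff] at hy hu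
  obtain ⟨⟨-, hsy⟩, hcy⟩ := hy
  obtain ⟨⟨-, hsu⟩, hcu⟩ := hu
  rw [show 2 * (u - π / 2) = 2 * u - π by ring, cot_eq_cos_div_sin, cot_eq_cos_div_sin y,
    cot_eq_cos_div_sin u, cot_eq_cos_div_sin (2 * y), cot_eq_cos_div_sin (2 * u - π),
    cos_sub_pi_div_two, sin_sub_pi_div_two, cos_sub_pi, sin_sub_pi, cos_sub, sin_two_mul u,
    sin_two_mul y, cos_two_mul u, cos_two_mul y]
  field_simp
  linear_combination (-4 * cos y * sin y) * sin_sq_add_cos_sq u +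
    2 * sin u * cos u * sin_sq_add_cos_sq y

lemma neg_mul_div_neg_add_neg_div_two (B a c : ℝ) :
    B * (-a * (-c / 2)) / (-a + -c / 2) = -(B * a) * c / (2 * a + c) := by
  rw [show -a + -c / 2 = -((2 * a + c) / 2) by ring, div_neg,
    show B * (-a * (-c / 2)) = B * a * c / 2 by ring, div_div_div_cancel_right₀ two_ne_zero]
  ring

lemma kappa20V_eq {y : ℝ} (hy : sin (2 * y) ≠ 0) (hu : sin (2 * y + 2 * ε) ≠ 0) :
    kappa20V (π / 4) (-(π / 4) + ε) 0 y = P ε y * Q ε y := by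
  have hα : π / (π - 2 * (π / 4)) = 2 := by
    rw [show π - 2 * (π / 4) = π / 2 by ring]; field_simp
  rw [show 2 * y + 2 * ε = 2 * (y + ε) by ring] at hu
  rw [kappa20V, P, Q, D, hα, show y + (-(π / 4) + ε) + π / 4 = y + ε by ring,
    show y + (-(π / 4) + ε) - π / 4 = y + ε - π / 2 by ring,
    show y + (-(π / 4) + ε - π / 4 + 0) / 2 = y + ε / 2 - π / 4 by ring,
    show y + (-(π / 4) + ε + 3 * (π / 4) + 0) / 2 = y + ε / 2 + π / 4 by ring,
    show 2 * (π / 4) = π / 2 by ring, sin_pi_div_two, one_mul, mul_assoc _ _ (sin _),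
    sin_sub_pi_div_four_mul_sin_add_pi_div_four, sin_sub_pi_div_two,
    show 2 * (y + ε / 2) = 2 * y + ε by ring, mul_neg, neg_mul_div_neg_add_neg_div_two,
    cot_combination_mul_sin_mul_cos hy hu, show 2 * (y + ε) - y = y + 2 * ε by ring,
    show 2 * y + 2 * ε = 2 * (y + ε) by ring, sin_two_mul, div_mul_eq_div_div]
  ring

lemma kappa20V_eventuallyEq {x : ℝ} (hx : sin (2 * x) ≠ 0) (hu : sin (2 * x + 2 * ε) ≠ 0) :
    kappa20V (π / 4) (-(π / 4) + ε) 0 =ᶠ[𝓝 x] P ε * Q ε := by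
  filter_upwards [(show Continuous fun y => sin (2 * y) by fun_prop).continuousAt.eventually_ne hx,
    (show Continuous fun y => sin (2 * y + 2 * ε) by fun_prop).continuousAt.eventually_ne hu]
    with y hy hu using kappa20V_eq hy hu

end ClosedForms

section Derivatives

variable {ε y : ℝ}

lemma hasDerivAt_D : HasDerivAt (D ε) (2 * (cos (2 * y + 2 * ε) - sin (2 * y + ε))) y :=
  ((hasDerivAt_sin_two_mul_add (2 * ε) y).add (hasDerivAt_cos_two_mul_add ε y)).congr_deriv
    (by ring)

lemma hasDerivAt_F (hy : sin (2 * y) ≠ 0) : HasDerivAt (F ε) (F' ε y) y := by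
  have h : sin (2 * y + 2 * ε) * cos (2 * y) - cos (2 * y + 2 * ε) * sin (2 * y) = sin (2 * ε) := by
    rw [← sin_sub]; ring_nf
  refine ((hasDerivAt_sin_two_mul_add (2 * ε) y).div (hasDerivAt_sin_two_mul y) hy).congr_deriv ?_
  rw [F', ← h]; ring

lemma hasDerivAt_G (hD : D ε y ≠ 0) : HasDerivAt (G ε) (G' ε y) y := by
  have h₁ : sin (2 * y + 2 * ε) * cos (2 * y) - cos (2 * y + 2 * ε) * sin (2 * y)
      = sin (2 * ε) := by
    rw [← sin_sub]; ring_nf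
  have h₂ : cos (2 * y + ε) * cos (2 * y) + sin (2 * y + ε) * sin (2 * y) = cos ε := by
    rw [← cos_sub]; ring_nf
  have h₃ : cos (2 * y + 2 * ε) * cos (2 * y + ε) + sin (2 * y + 2 * ε) * sin (2 * y + ε)
      = cos ε := by
    rw [← cos_sub]; ring_nf
  refine (((hasDerivAt_sin_two_mul y).sub (hasDerivAt_cos_two_mul_add ε y)).div
    hasDerivAt_D hD).congr_deriv ?_
  simp only [Pi.sub_apply, G']
  congr 1
  rw [D]
  linear_combination 2 * h₁ + 2 * h₂ + 2 * h₃

lemma hasDerivAt_P (hy : cos y ≠ 0) : HasDerivAt (P ε) (P' ε y) y := by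
  have h : sin (y + 2 * ε) * cos y - cos (y + 2 * ε) * sin y = sin (2 * ε) := by
    rw [← sin_sub]; ring_nf
  refine (((((hasDerivAt_id' y).add_const (2 * ε)).cos).div (hasDerivAt_cos y) hy).add_const
    3).congr_deriv ?_
  rw [P', ← h]; ring

lemma hasDerivAt_Q (hD : D ε y ≠ 0) : HasDerivAt (Q ε) (Q' ε y) y := by
  have h : cos (2 * y + 2 * ε) * cos (2 * y + ε) + sin (2 * y + 2 * ε) * sin (2 * y + ε)
      = cos ε := by
    rw [← cos_sub]; ring_nf
  refine ((hasDerivAt_cos_two_mul_add ε y).div (hasDerivAt_D.const_mul 2)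
    (mul_ne_zero two_ne_zero hD)).congr_deriv ?_
  rw [Q', ← h, D]
  field_simp
  ring

lemma Xne_eq (h2y : sin (2 * y) ≠ 0) (hu : sin (2 * y + 2 * ε) ≠ 0) (hy : cos y ≠ 0)
    (hD : D ε y ≠ 0) :
    Xne (π / 4) (-(π / 4) + ε) 0 y =
      (P' ε y * Q ε y + P ε y * Q' ε y) / (F' ε y * G ε y + F ε y * G' ε y) := by
  rw [Xne, (kappa20V_eventuallyEq h2y hu).deriv_eq, ((hasDerivAt_P hy).mul (hasDerivAt_Q hD)).deriv,
    A20V_eq, ((hasDerivAt_F h2y).mul (hasDerivAt_G hD)).deriv]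

lemma Yne_eq (h2y : sin (2 * y) ≠ 0) (hu : sin (2 * y + 2 * ε) ≠ 0) :
    Yne (π / 4) (-(π / 4) + ε) 0 y =
      P ε y * Q ε y - F ε y * G ε y * Xne (π / 4) (-(π / 4) + ε) 0 y := by
  rw [Yne, kappa20V_eq h2y hu, A20V_eq, Pi.mul_apply]

end Derivatives

lemma eventually_nondegenerate {ξ : ℝ} (hξ : 0 < ξ) :
    ∀ᶠ s in 𝓝[>] (0 : ℝ), sin (2 * (ξ * s)) ≠ 0 ∧ sin (2 * (ξ * s) + 2 * s ^ 2) ≠ 0 ∧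
      cos (ξ * s) ≠ 0 ∧ D (s ^ 2) (ξ * s) ≠ 0 := by
  have hsmall : ∀ᶠ s in 𝓝[>] (0 : ℝ), 2 * (ξ * s) + 2 * s ^ 2 < π / 2 :=
    (tendsto_nhdsGT_of_eqOn_of_continuousAt (b := 0) (fun _ _ => rfl) (by fun_prop)
      (by simp)).eventually (gt_mem_nhds (by positivity))
  filter_upwards [hsmall, self_mem_nhdsWithin] with s h (hs : 0 < s)
  have hx : 0 < ξ * s := mul_pos hξ hs
  have hε : 0 < s ^ 2 := by positivity
  have hπ := pi_pos
  exact ⟨(sin_pos_of_pos_of_lt_pi (by linarith) (by linarith)).ne',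
    (sin_pos_of_pos_of_lt_pi (by linarith) (by linarith)).ne',
    (cos_pos_of_mem_Ioo ⟨by linarith, by linarith⟩).ne',
    (add_pos (sin_pos_of_pos_of_lt_pi (by linarith) (by linarith))
      (cos_pos_of_mem_Ioo ⟨by linarith, by linarith⟩)).ne'⟩

lemma tendsto_F {ξ : ℝ} (hξ : ξ ≠ 0) : Tendsto (fun s => F (s ^ 2) (ξ * s)) (𝓝[>] 0) (𝓝 1) := by
  refine tendsto_nhdsGT_of_eqOn_of_continuousAt (g := fun s =>
    (ξ + s) * sinc (2 * (ξ * s) + 2 * s ^ 2) / (ξ * sinc (2 * (ξ * s)))) (fun s hs => ?_)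
    (by fun_prop (disch := simp [hξ])) (by simp [hξ])
  have hs : s ≠ 0 := ne_of_gt hs
  rw [F, ← mul_sinc, ← mul_sinc (2 * (ξ * s))]
  rcases eq_or_ne (sinc (2 * (ξ * s))) 0 with h | h
  · simp [h]
  · field_simp

lemma tendsto_F' {ξ : ℝ} (hξ : ξ ≠ 0) :
    Tendsto (fun s => F' (s ^ 2) (ξ * s)) (𝓝[>] 0) (𝓝 (-1 / ξ ^ 2)) := by
  refine tendsto_nhdsGT_of_eqOn_of_continuousAt (g := fun s =>
    -sinc (2 * s ^ 2) / (ξ ^ 2 * sinc (2 * (ξ * s)) ^ 2)) (fun s hs => ?_)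
    (by fun_prop (disch := simp [hξ])) (by simp)
  have hs : s ≠ 0 := ne_of_gt hs
  rw [F', ← mul_sinc, ← mul_sinc (2 * (ξ * s))]
  rcases eq_or_ne (sinc (2 * (ξ * s))) 0 with h | h
  · simp [h]
  · field_simp

lemma tendsto_G (ξ : ℝ) : Tendsto (fun s => G (s ^ 2) (ξ * s)) (𝓝[>] 0) (𝓝 (-1)) :=
  tendsto_nhdsGT_of_eqOn_of_continuousAt (fun _ _ => rfl)
    (by unfold G D; fun_prop (disch := simp)) (by simp [G, D])

lemma tendsto_G' (ξ : ℝ) : Tendsto (fun s => G' (s ^ 2) (ξ * s)) (𝓝[>] 0) (𝓝 4) :=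
  tendsto_nhdsGT_of_eqOn_of_continuousAt (fun _ _ => rfl)
    (by unfold G' D; fun_prop (disch := simp)) (by norm_num [G', D])

lemma tendsto_P (ξ : ℝ) : Tendsto (fun s => P (s ^ 2) (ξ * s)) (𝓝[>] 0) (𝓝 4) :=
  tendsto_nhdsGT_of_eqOn_of_continuousAt (fun _ _ => rfl)
    (by unfold P; fun_prop (disch := simp)) (by norm_num [P])

lemma tendsto_P' (ξ : ℝ) : Tendsto (fun s => P' (s ^ 2) (ξ * s)) (𝓝[>] 0) (𝓝 0) :=
  tendsto_nhdsGT_of_eqOn_of_continuousAt (fun _ _ => rfl)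
    (by unfold P'; fun_prop (disch := simp)) (by simp [P'])

lemma tendsto_Q (ξ : ℝ) : Tendsto (fun s => Q (s ^ 2) (ξ * s)) (𝓝[>] 0) (𝓝 (1 / 2)) :=
  tendsto_nhdsGT_of_eqOn_of_continuousAt (fun _ _ => rfl)
    (by unfold Q D; fun_prop (disch := simp)) (by simp [Q, D])

lemma tendsto_Q' (ξ : ℝ) : Tendsto (fun s => Q' (s ^ 2) (ξ * s)) (𝓝[>] 0) (𝓝 (-1)) :=
  tendsto_nhdsGT_of_eqOn_of_continuousAt (fun _ _ => rfl)
    (by unfold Q' D; fun_prop (disch := simp)) (by simp [Q', D])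

lemma tendsto_Xne {ξ : ℝ} (hξ : 0 < ξ) :
    Tendsto (fun s => Xne (π / 4) (-(π / 4) + s ^ 2) 0 (ξ * s)) (𝓝[>] 0)
      (𝓝 (-(4 * ξ ^ 2 / (1 + 4 * ξ ^ 2)))) := by
  have hden : -1 / ξ ^ 2 * -1 + 1 * 4 ≠ 0 := by rw [neg_div, neg_mul_neg, mul_one]; positivity
  have h := (((tendsto_P' ξ).mul (tendsto_Q ξ)).add ((tendsto_P ξ).mul (tendsto_Q' ξ))).div
    (((tendsto_F' hξ.ne').mul (tendsto_G ξ)).add ((tendsto_F hξ.ne').mul (tendsto_G' ξ))) hden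
  convert h.congr' ?_ using 2
  · field_simp
    ring
  · filter_upwards [eventually_nondegenerate hξ] with s ⟨h2x, hu, hx, hD⟩
    exact (Xne_eq h2x hu hx hD).symm

lemma tendsto_Yne {ξ : ℝ} (hξ : 0 < ξ) :
    Tendsto (fun s => Yne (π / 4) (-(π / 4) + s ^ 2) 0 (ξ * s)) (𝓝[>] 0)
      (𝓝 (2 - 4 * ξ ^ 2 / (1 + 4 * ξ ^ 2))) := by
  have h := ((tendsto_P ξ).mul (tendsto_Q ξ)).sub
    (((tendsto_F hξ.ne').mul (tendsto_G ξ)).mul (tendsto_Xne hξ))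
  convert h.congr' ?_ using 2
  · ring
  · filter_upwards [eventually_nondegenerate hξ] with s ⟨h2x, hu, _, _⟩
    exact (Yne_eq h2x hu).symm

end FreeFermion

/-- In the free-fermion case `η = π/4`, `μ = 0`, the NE
arctic-curve parametrization degenerates to a straight segment as `λ → -π/4⁺`,
under the square-root rescaling `ξ ↦ ξ√ε` of the parameter. -/
theorem NE_branch_free_fermion_segment' (ξ : ℝ) (h0 : 0 < ξ) :
    Tendsto (fun ε : ℝ => Xne (π / 4) (-(π / 4) + ε) 0 (ξ * Real.sqrt ε)) (𝓝[>] 0)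
      (𝓝 (-(4 * ξ ^ 2 / (1 + 4 * ξ ^ 2)))) ∧
    Tendsto (fun ε : ℝ => Yne (π / 4) (-(π / 4) + ε) 0 (ξ * Real.sqrt ε)) (𝓝[>] 0)
      (𝓝 (2 - 4 * ξ ^ 2 / (1 + 4 * ξ ^ 2))) := by
  refine ⟨tendsto_nhdsGT_zero_of_comp_sq ((FreeFermion.tendsto_Xne h0).congr' ?_),
    tendsto_nhdsGT_zero_of_comp_sq ((FreeFermion.tendsto_Yne h0).congr' ?_)⟩ <;>
  · filter_upwards [self_mem_nhdsWithin] with s (hs : 0 < s)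
    rw [sqrt_sq hs.le]
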